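/- arXiv:1904.02937 — 2 statements merged into one kernel-verified Lean document; each statement's English description precedes it below -/
import Mathlib

section
/- Let X be a topological space, s a natural number, and Z' ⊆ X a closed subset with codim(Z', X) ≥ s. Then for any two distinct irreducible components Z'_i ≠ Z'_j of Z', one has codim(Z'_i ∩ Z'_j, X) ≥ s + 1. -/
open Set

/-- The codimension of an irreducible closed subset `Z` of a topological space `X`:
the supremum of all `s : ℕ` such that there is a chain
`Z = Z_s ⊊ Z_{s-1} ⊊ … ⊊ Z_0 ⊆ X` of nonempty irreducible closed subsets of `X`. -/
noncomputable def irredCodim {X : Type*} [TopologicalSpace X] (Z : Set X) : ℕ∞ :=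
  sSup {n : ℕ∞ | ∃ s : ℕ, n = (s : ℕ∞) ∧ ∃ c : Fin (s + 1) → Set X,
    c 0 = Z ∧ StrictMono c ∧ ∀ i, IsClosed (c i) ∧ IsIrreducible (c i)}

/-- The irreducible components of a subset `Z` of a topological space `X`, i.e. the
maximal irreducible subsets of `Z`. -/
def irredComponentsIn {X : Type*} [TopologicalSpace X] (Z : Set X) : Set (Set X) :=
  {C | Maximal (fun T => T ⊆ Z ∧ IsIrreducible T) C}

/-- The codimension of an arbitrary closed subset `Z ⊆ X`: the infimum of the
codimensions of the irreducible components of `Z`; by convention `codim(∅, X) = ∞`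
(the infimum of the empty set in `ℕ∞`). -/
noncomputable def setCodim {X : Type*} [TopologicalSpace X] (Z : Set X) : ℕ∞ :=
  sInf (irredCodim '' irredComponentsIn Z)

/-!
Since distinct components `C ≠ D` of `Z'` satisfy `C ⊄ D` by maximality, every component `E`
of `C ∩ D` is a proper closed irreducible subset of the component `C`. Prepending `E` to a chain
witnessing `codim(C) ≥ s` gives a chain witnessing `codim(E) ≥ s + 1`.
-/

section

variable {X : Type*} [TopologicalSpace X]

def IsIrredClosedChain {n : ℕ} (c : Fin n → Set X) : Prop :=
  StrictMono c ∧ ∀ i, IsClosed (c i) ∧ IsIrreducible (c i)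

lemma IsIrredClosedChain.cons {n : ℕ} {c : Fin (n + 1) → Set X} (hc : IsIrredClosedChain c)
    {E : Set X} (hE : IsClosed E ∧ IsIrreducible E) (hEc : E ⊂ c 0) :
    IsIrredClosedChain (Fin.cons E c : Fin (n + 2) → Set X) := by
  refine ⟨Fin.strictMono_cons.2 ⟨fun j => hEc.trans_le (hc.1.monotone (Fin.zero_le j)), hc.1⟩, ?_⟩
  intro i
  induction i using Fin.cases with
  | zero => exact hE
  | succ j => exact hc.2 j

lemma le_irredCodim_of_isIrredClosedChain {n : ℕ} {c : Fin (n + 1) → Set X}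
    (hc : IsIrredClosedChain c) : (n : ℕ∞) ≤ irredCodim (c 0) :=
  le_sSup ⟨n, rfl, c, rfl, hc⟩

lemma irredCodim_add_one_le_of_ssubset {C E : Set X} (hC : IsClosed C ∧ IsIrreducible C)
    (hE : IsClosed E ∧ IsIrreducible E) (hEC : E ⊂ C) : irredCodim C + 1 ≤ irredCodim E := by
  have hchain : IsIrredClosedChain (fun _ : Fin 1 => C) :=
    ⟨Subsingleton.strictMono _, fun _ => hC⟩
  rw [irredCodim, ENat.sSup_add ⟨0, mem_ofPred.2 ⟨0, rfl, fun _ => C, rfl, hchain⟩⟩]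
  refine iSup₂_le ?_
  rintro _ ⟨n, rfl, c, rfl, hc⟩
  exact_mod_cast le_irredCodim_of_isIrredClosedChain (IsIrredClosedChain.cons hc hE hEC)

lemma isClosed_of_mem_irredComponentsIn {Z C : Set X} (hZ : IsClosed Z)
    (hC : C ∈ irredComponentsIn Z) : IsClosed C :=
  closure_subset_iff_isClosed.1 <|
    hC.2 ⟨hZ.closure_subset_iff.2 hC.1.1, hC.1.2.closure⟩ subset_closure

lemma not_subset_of_mem_irredComponentsIn {Z C D : Set X} (hC : C ∈ irredComponentsIn Z)
    (hD : D ∈ irredComponentsIn Z) (hCD : C ≠ D) : ¬ C ⊆ D :=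
  fun h => hCD (Maximal.eq_of_le (P := fun T => T ⊆ Z ∧ IsIrreducible T) hC hD.1 h)

lemma setCodim_le_irredCodim {Z C : Set X} (hC : C ∈ irredComponentsIn Z) :
    setCodim Z ≤ irredCodim C :=
  sInf_le ⟨C, hC, rfl⟩

end

/-- Let `X` be a topological space, `s` a natural number, and `Z' ⊆ X` a closed subset
with `codim(Z', X) ≥ s`.  Then for any two distinct irreducible components
`Z'_i ≠ Z'_j` of `Z'`, one has `codim(Z'_i ∩ Z'_j, X) ≥ s + 1`. -/
theorem stmt4 {X : Type*} [TopologicalSpace X] (s : ℕ) (Z' : Set X)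
    (hcl : IsClosed Z') (hcodim : (s : ℕ∞) ≤ setCodim Z')
    (C D : Set X) (hC : C ∈ irredComponentsIn Z') (hD : D ∈ irredComponentsIn Z')
    (hCD : C ≠ D) :
    (s : ℕ∞) + 1 ≤ setCodim (C ∩ D) := by
  have hCcl := isClosed_of_mem_irredComponentsIn hcl hC
  have hCDcl := hCcl.inter (isClosed_of_mem_irredComponentsIn hcl hD)
  refine le_sInf ?_
  rintro _ ⟨E, hE, rfl⟩
  have hEC : E ⊂ C := ssubset_of_subset_of_ssubset hE.1.1 <|
    inter_subset_left.ssubset_of_not_subset fun h =>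
      not_subset_of_mem_irredComponentsIn hC hD hCD (h.trans inter_subset_right)
  calc (s : ℕ∞) + 1 ≤ irredCodim C + 1 := by gcongr; exact hcodim.trans (setCodim_le_irredCodim hC)
    _ ≤ irredCodim E := irredCodim_add_one_le_of_ssubset ⟨hCcl, hC.1.2⟩
        ⟨isClosed_of_mem_irredComponentsIn hCDcl hE, hE.1.2⟩ hEC
end

section
/- Fix an integer d ≥ 0. Suppose given abelian groups A_s^m for integers m and 0 ≤ s ≤ d + 1 with A_{d+1}^m = 0 for all m, abelian groups B_s^m for 0 ≤ s ≤ d, and homomorphisms α_s^m : A_{s+1}^m → A_s^m, β_s^m : A_s^m → B_s^m, γ_s^m : B_s^m → A_{s+1}^{m+1}, such that for each s with 0 ≤ s ≤ d the sequence ⋯ → A_{s+1}^m →(α_s^m) A_s^m →(β_s^m) B_s^m →(γ_s^m) A_{s+1}^{m+1} →(α_s^{m+1}) A_s^{m+1} → ⋯ is exact. Fix an integer n, and define e := β_0^n : A_0^n → B_0^n and, for 0 ≤ s ≤ d − 1, d^s := β_{s+1}^{n+s+1} ∘ γ_s^{n+s} : B_s^{n+s} → B_{s+1}^{n+s+1}.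 Let 0 ≤ s ≤ d, and suppose that α_{s+1}^{n+s+1} : A_{s+2}^{n+s+1} → A_{s+1}^{n+s+1} is the zero map (this is automatic for s = d, d − 1 being vacuous or A_{d+1} = 0 appropriately interpreted via setting A_t = 0 and α zero for t > d) and that, if s ≥ 1, α_{s-1}^{n+s} : A_s^{n+s} → A_{s-1}^{n+s} is the zero map. Then the complex 0 → A_0^n →(e) B_0^n →(d^0) B_1^{n+1} → ⋯ →(d^{d-1}) B_d^{n+d} → 0 is exact at the spot B_s^{n+s}; that is, ker(d^s) = im(d^{s-1}) for 1 ≤ s ≤ d − 1, ker(d^0) = im(e) for s = 0, and B_d^{n+d} = im(d^{d-1}) for s = d (when d ≥ 1). -/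
/-!
Vanishing of `α_{s+1}^{n+s+1}` makes `β_{s+1}^{n+s+1}` injective, so `ker d^s = ker γ_s = im β_s`;
vanishing of `α_{s-1}^{n+s}` makes `γ_{s-1}^{n+s-1}` surjective, so `im d^{s-1} = im β_s`.
At `s = d`, `A_{d+1} = 0` forces `γ_d = 0`, hence `β_d` is surjective.
-/

namespace Function.Exact

variable {M M' N P : Type*}

lemma comp_surjective [Zero P] {f : M → N} {g : N → P} (h : Exact f g) {p : M' → M}
    (hp : Surjective p) : Exact (f ∘ p) g := by
  intro y
  rw [h y, hp.range_comp]

lemma surjective_of_forall_eq_zero [Zero P] {f : M → N} {g : N → P} (h : Exact f g)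
    (hg : ∀ y, g y = 0) : Surjective f :=
  fun y ↦ (h y).1 (hg y)

lemma injective_of_forall_eq_zero [AddGroup N] [AddZeroClass P] {f : M → N} {g : N →+ P}
    (h : Exact f g) (hf : ∀ x, f x = 0) : Injective g := by
  refine (injective_iff_map_eq_zero g).2 fun y hy ↦ ?_
  obtain ⟨x, rfl⟩ := (h y).1 hy
  exact hf x

end Function.Exact

theorem stmt8_general (d : ℕ) (n : ℤ) (s : ℕ)
    (A : ℕ → ℤ → Type*) [∀ t m, AddCommGroup (A t m)]
    (B : ℕ → ℤ → Type*) [∀ t m, AddCommGroup (B t m)]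
    (htriv : ∀ m : ℤ, ∀ x : A (d + 1) m, x = 0)
    (α : ∀ (t : ℕ) (m : ℤ), A (t + 1) m →+ A t m)
    (β : ∀ (t : ℕ) (m : ℤ), A t m →+ B t m)
    (γ : ∀ (t : ℕ) (m : ℤ), B t m →+ A (t + 1) (m + 1))
    (hex1 : ∀ t ≤ d, ∀ m : ℤ, Function.Exact ⇑(α t m) ⇑(β t m))
    (hex2 : ∀ t ≤ d, ∀ m : ℤ, Function.Exact ⇑(β t m) ⇑(γ t m))
    (hex3 : ∀ t ≤ d, ∀ m : ℤ, Function.Exact ⇑(γ t m) ⇑(α t (m + 1)))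
    -- `α_{s+1}^{n+s+1} : A_{s+2}^{n+s+1} → A_{s+1}^{n+s+1}` is the zero map:
    (hα1 : ∀ x : A (s + 1 + 1) (n + s + 1), α (s + 1) (n + s + 1) x = 0)
    -- if `s ≥ 1`, then `α_{s-1}^{n+s} : A_s^{n+s} → A_{s-1}^{n+s}` is the zero map:
    (hα2 : ∀ t : ℕ, s = t + 1 → ∀ x : A (t + 1) (n + s), α t (n + s) x = 0) :
    -- exactness at the spot `B_s^{n+s}`:
    (s = 0 → d = 0 → Function.Surjective ⇑(β 0 n)) ∧
    (s = 0 → 1 ≤ d →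
      Function.Exact ⇑(β 0 n) ⇑((β 1 (n + 1)).comp (γ 0 n))) ∧
    (∀ t : ℕ, s = t + 1 → s + 1 ≤ d →
      Function.Exact ⇑((β (t + 1) (n + t + 1)).comp (γ t (n + t)))
        ⇑((β (t + 1 + 1) (n + t + 1 + 1)).comp (γ (t + 1) (n + t + 1)))) ∧
    (∀ t : ℕ, s = t + 1 → s = d →
      Function.Surjective ⇑((β (t + 1) (n + t + 1)).comp (γ t (n + t)))) := by
  refine ⟨fun hs0 hd0 ↦ ?_, fun hs0 hd ↦ ?_, fun t hst hd ↦ ?_, fun t hst hd ↦ ?_⟩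
  · subst hs0 hd0
    exact (hex2 0 le_rfl n).surjective_of_forall_eq_zero fun _ ↦ htriv _ _
  · subst hs0
    rw [Nat.cast_zero, add_zero] at hα1
    exact (hex2 0 d.zero_le n).comp_injective _
      ((hex1 1 hd (n + 1)).injective_of_forall_eq_zero hα1) (map_zero (β 1 (n + 1)))
  · subst hst
    have hα2 := hα2 t rfl
    rw [Nat.cast_succ, ← add_assoc] at hα1 hα2
    have hγ_surj := (hex3 t (by omega) (n + t)).surjective_of_forall_eq_zero hα2
    have hβ_inj := (hex1 (t + 1 + 1) hd (n + t + 1 + 1)).injective_of_forall_eq_zero hα1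
    exact ((hex2 (t + 1) (by omega) (n + t + 1)).comp_injective _ hβ_inj
      (map_zero (β _ _))).comp_surjective hγ_surj
  · subst hst hd
    have hα2 := hα2 t rfl
    rw [Nat.cast_succ, ← add_assoc] at hα2
    have hγ_surj := (hex3 t t.le_succ (n + t)).surjective_of_forall_eq_zero hα2
    have hβ_surj := (hex2 (t + 1) le_rfl (n + t + 1)).surjective_of_forall_eq_zero
      fun _ ↦ htriv _ _
    exact hβ_surj.comp hγ_surj

/-- Fix `d ≥ 0`.  Given abelian groups `A_s^m` (for `0 ≤ s ≤ d + 1`, with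
`A_{d+1}^m = 0`, and `A_t` interpreted as `0` for `t > d`), abelian groups `B_s^m`
(for `0 ≤ s ≤ d`), and homomorphisms `α_s^m : A_{s+1}^m → A_s^m`,
`β_s^m : A_s^m → B_s^m`, `γ_s^m : B_s^m → A_{s+1}^{m+1}` such that for each
`0 ≤ s ≤ d` the long sequence
`⋯ → A_{s+1}^m → A_s^m → B_s^m → A_{s+1}^{m+1} → A_s^{m+1} → ⋯` is exact.
Fix `n`, set `e := β_0^n` and `d^s := β_{s+1}^{n+s+1} ∘ γ_s^{n+s}`.  Let `0 ≤ s ≤ d`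
and suppose `α_{s+1}^{n+s+1}` is the zero map, and, if `s ≥ 1`, also
`α_{s-1}^{n+s}` is the zero map.  Then the complex
`0 → A_0^n → B_0^n → B_1^{n+1} → ⋯ → B_d^{n+d} → 0` is exact at the spot
`B_s^{n+s}`: `ker(d^s) = im(d^{s-1})` for `1 ≤ s ≤ d - 1`, `ker(d^0) = im(e)` for
`s = 0` (and `e` surjective if moreover `d = 0`), and `B_d^{n+d} = im(d^{d-1})`
for `s = d` with `d ≥ 1`. -/
theorem stmt8 (d : ℕ) (n : ℤ) (s : ℕ) (hs : s ≤ d)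
    (A : ℕ → ℤ → Type*) [∀ t m, AddCommGroup (A t m)]
    (B : ℕ → ℤ → Type*) [∀ t m, AddCommGroup (B t m)]
    (htriv : ∀ m : ℤ, ∀ x : A (d + 1) m, x = 0)
    (α : ∀ (t : ℕ) (m : ℤ), A (t + 1) m →+ A t m)
    (β : ∀ (t : ℕ) (m : ℤ), A t m →+ B t m)
    (γ : ∀ (t : ℕ) (m : ℤ), B t m →+ A (t + 1) (m + 1))
    (hex1 : ∀ t ≤ d, ∀ m : ℤ, Function.Exact ⇑(α t m) ⇑(β t m))
    (hex2 : ∀ t ≤ d, ∀ m : ℤ, Function.Exact ⇑(β t m) ⇑(γ t m))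
    (hex3 : ∀ t ≤ d, ∀ m : ℤ, Function.Exact ⇑(γ t m) ⇑(α t (m + 1)))
    -- `α_{s+1}^{n+s+1} : A_{s+2}^{n+s+1} → A_{s+1}^{n+s+1}` is the zero map:
    (hα1 : ∀ x : A (s + 1 + 1) (n + s + 1), α (s + 1) (n + s + 1) x = 0)
    -- if `s ≥ 1`, then `α_{s-1}^{n+s} : A_s^{n+s} → A_{s-1}^{n+s}` is the zero map:
    (hα2 : ∀ t : ℕ, s = t + 1 → ∀ x : A (t + 1) (n + s), α t (n + s) x = 0) :
    -- exactness at the spot `B_s^{n+s}`: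
    (s = 0 → d = 0 → Function.Surjective ⇑(β 0 n)) ∧
    (s = 0 → 1 ≤ d →
      Function.Exact ⇑(β 0 n) ⇑((β 1 (n + 1)).comp (γ 0 n))) ∧
    (∀ t : ℕ, s = t + 1 → s + 1 ≤ d →
      Function.Exact ⇑((β (t + 1) (n + t + 1)).comp (γ t (n + t)))
        ⇑((β (t + 1 + 1) (n + t + 1 + 1)).comp (γ (t + 1) (n + t + 1)))) ∧
    (∀ t : ℕ, s = t + 1 → s = d →
      Function.Surjective ⇑((β (t + 1) (n + t + 1)).comp (γ t (n + t)))) :=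
  stmt8_general d n s A B htriv α β γ hex1 hex2 hex3 hα1 hα2
end
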